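/- Let G₁ and G₂ be finite simple graphs whose vertex sets intersect in exactly one vertex x. Suppose every maximum minimal vertex cover of G₁ contains x, and there exists a maximum minimal vertex cover C₂ of G₂ with x ∉ C₂ such that no neighbour y of x in G₂ has all of its neighbours other than x contained in C₂. Then for every maximum minimal vertex cover C₁ of G₁, the set C₁ ∪ C₂ is a maximum minimal vertex cover of G₁ ∪ G₂, and C₁ and C₂ are disjoint. -/
import Mathlib


open SimpleGraph MvPolynomial

/-- `C` is a vertex cover of `G`. -/
def IsVC {V : Type*} (G : SimpleGraph V) (C : Set V) : Prop :=
  ∀ ⦃u v : V⦄, G.Adj u v → u ∈ C ∨ v ∈ C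

/-- `C` is a minimal vertex cover of `G`. -/
def IsMinVC {V : Type*} (G : SimpleGraph V) (C : Set V) : Prop :=
  IsVC G C ∧ ∀ D ⊂ C, ¬ IsVC G D

/-- `C` is a maximum minimal vertex cover of `G`. -/
def IsMaxMinVC {V : Type*} [Fintype V] (G : SimpleGraph V) (C : Set V) : Prop :=
  IsMinVC G C ∧ ∀ D : Set V, IsMinVC G D → D.ncard ≤ C.ncard

/-- In a minimal vertex cover, every vertex has a neighbour outside the cover. -/
lemma minVC_priv {V : Type*} {G : SimpleGraph V} {C : Set V} (h : IsMinVC G C) :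
    ∀ v ∈ C, ∃ u, G.Adj v u ∧ u ∉ C := by
  intro v hv
  have hss : C \ {v} ⊂ C := Set.sdiff_singleton_ssubset.mpr hv
  have hnvc := h.2 _ hss
  unfold IsVC at hnvc
  push_neg at hnvc
  obtain ⟨a, b, hab, ha, hb⟩ := hnvc
  rcases h.1 hab with h1 | h1
  · have hav : a = v := by
      by_contra hne
      exact ha ⟨h1, hne⟩
    subst hav
    refine ⟨b, hab, fun hbC => ?_⟩
    exact hb ⟨hbC, hab.ne'⟩
  · have hbv : b = v := by
      by_contra hne
      exact hb ⟨h1, hne⟩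
    subst hbv
    refine ⟨a, hab.symm, fun haC => ?_⟩
    exact ha ⟨haC, hab.ne⟩

/-- A vertex cover in which every vertex has a neighbour outside is minimal. -/
lemma minVC_of_priv {V : Type*} {G : SimpleGraph V} {C : Set V} (hvc : IsVC G C)
    (hp : ∀ v ∈ C, ∃ u, G.Adj v u ∧ u ∉ C) : IsMinVC G C := by
  refine ⟨hvc, fun D hD hDvc => ?_⟩
  obtain ⟨v, hvC, hvD⟩ := Set.exists_of_ssubset hD
  obtain ⟨u, hadj, huC⟩ := hp v hvC
  rcases hDvc hadj with h | h
  · exact hvD h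
  · exact huC (hD.subset h)

/-- A minimal vertex cover is contained in the support. -/
lemma minVC_subset_support {V : Type*} {G : SimpleGraph V} {C : Set V}
    (h : IsMinVC G C) : C ⊆ G.support := fun v hv => by
  obtain ⟨u, hadj, _⟩ := minVC_priv h v hv
  exact ⟨u, hadj⟩

/-- From a minimal vertex cover `D` of `G ⊔ H`, whose supports meet exactly in `x`,
one extracts a minimal vertex cover `E` of `G` sandwiched between
`(D ∩ G.support) \ {x}` and `D ∩ G.support`; moreover `x ∈ E` whenever `x ∈ D` and
`x` has a `G`-neighbour outside `D`. -/
lemma side_lemma {V : Type*} {G H : SimpleGraph V} {x : V}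
    (hx : G.support ∩ H.support = {x}) {D : Set V}
    (hmin : IsMinVC (G ⊔ H) D) :
    ∃ E : Set V, IsMinVC G E ∧ E ⊆ D ∧ (D ∩ G.support) \ {x} ⊆ E ∧
      ((x ∈ D ∧ ∃ u, G.Adj x u ∧ u ∉ D) → x ∈ E) := by
  have hp := minVC_priv hmin
  set D₁ := D ∩ G.support with hD₁def
  have key : ∀ v, v ∈ G.support → v ∈ H.support → v = x := fun v h1 h2 =>
    Set.mem_singleton_iff.mp (hx ▸ Set.mem_inter h1 h2)
  have hxs : x ∈ G.support := by
    have : x ∈ G.support ∩ H.support := by rw [hx]; exact rfl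
    exact this.1
  -- every vertex of D₁ other than x has a G-neighbour outside D
  have nonx : ∀ v ∈ D₁, v ≠ x → ∃ u, G.Adj v u ∧ u ∉ D := by
    intro v hv hne
    obtain ⟨u, hadj, hu⟩ := hp v hv.1
    rcases (SimpleGraph.sup_adj _ _ _ _).mp hadj with h | h
    · exact ⟨u, h, hu⟩
    · exact absurd (key v hv.2 ⟨u, h⟩) hne
  -- D₁ is a vertex cover of G
  have hD₁vc : IsVC G D₁ := by
    intro u v hadj
    rcases hmin.1 ((SimpleGraph.sup_adj _ _ _ _).mpr (Or.inl hadj)) with h | h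
    · exact Or.inl ⟨h, v, hadj⟩
    · exact Or.inr ⟨h, u, hadj.symm⟩
  by_cases hcase : x ∈ D ∧ ∃ u, G.Adj x u ∧ u ∉ D
  · refine ⟨D₁, minVC_of_priv hD₁vc ?_, Set.inter_subset_left, Set.diff_subset, fun _ => ⟨hcase.1, hxs⟩⟩
    intro v hv
    by_cases hvx : v = x
    · subst hvx
      obtain ⟨u, hadj, hu⟩ := hcase.2
      exact ⟨u, hadj, fun huD => hu huD.1⟩
    · obtain ⟨u, hadj, hu⟩ := nonx v hv hvx
      exact ⟨u, hadj, fun huD => hu huD.1⟩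
  · -- here every G-neighbour of x is in D whenever x ∈ D; D₁ \ {x} works
    have hforced : x ∈ D → ∀ u, G.Adj x u → u ∈ D := by
      intro hxD u hadj
      by_contra hu
      exact hcase ⟨hxD, u, hadj, hu⟩
    have claim : ∀ u v, G.Adj u v → u ∈ D₁ → u ∈ D₁ \ {x} ∨ v ∈ D₁ \ {x} := by
      intro u v hadj hu
      by_cases hux : u = x
      · subst hux
        have hvD : v ∈ D := hforced hu.1 v hadj
        exact Or.inr ⟨⟨hvD, u, hadj.symm⟩, hadj.ne'⟩
      · exact Or.inl ⟨hu, hux⟩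
    have hvc : IsVC G (D₁ \ {x}) := by
      intro u v hadj
      rcases hD₁vc hadj with h | h
      · exact claim u v hadj h
      · rcases claim v u hadj.symm h with h' | h'
        · exact Or.inr h'
        · exact Or.inl h'
    refine ⟨D₁ \ {x}, minVC_of_priv hvc ?_, fun v hv => hv.1.1, subset_refl _,
      fun h => absurd h hcase⟩
    intro v hv
    obtain ⟨u, hadj, hu⟩ := nonx v hv.1 hv.2
    exact ⟨u, hadj, fun huD => hu huD.1.1⟩

/-- Case (iii) of the gluing lemma: every maximum minimal vertex cover of `G₁` contains
`x`, and there is a maximum minimal vertex cover `C₂` of `G₂` avoiding `x` in which no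
neighbour of `x` is redundant. Then for every maximum minimal vertex cover `C₁` of `G₁`,
`C₁ ∪ C₂` is a maximum minimal vertex cover of `G₁ ∪ G₂` and `C₁`, `C₂` are disjoint. -/
theorem stmt_3 {V : Type*} [Fintype V] (G₁ G₂ : SimpleGraph V) (x : V)
    (hx : G₁.support ∩ G₂.support = {x})
    (hall : ∀ C₁ : Set V, IsMaxMinVC G₁ C₁ → x ∈ C₁)
    (C₂ : Set V) (h₂ : IsMaxMinVC G₂ C₂) (hx₂ : x ∉ C₂)
    (hred : ∀ y : V, G₂.Adj x y → ∃ z : V, G₂.Adj y z ∧ z ≠ x ∧ z ∉ C₂) :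
    ∀ C₁ : Set V, IsMaxMinVC G₁ C₁ →
      IsMaxMinVC (G₁ ⊔ G₂) (C₁ ∪ C₂) ∧ Disjoint C₁ C₂ := by
  intro C₁ h₁
  obtain ⟨hC₁min, hC₁max⟩ := h₁
  obtain ⟨hC₂min, hC₂max⟩ := h₂
  have key : ∀ v, v ∈ G₁.support → v ∈ G₂.support → v = x := fun v h1 h2 =>
    Set.mem_singleton_iff.mp (hx ▸ Set.mem_inter h1 h2)
  have hs₁ : C₁ ⊆ G₁.support := minVC_subset_support hC₁min
  have hs₂ : C₂ ⊆ G₂.support := minVC_subset_support hC₂min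
  have hdisj : Disjoint C₁ C₂ := by
    rw [Set.disjoint_left]
    intro a ha₁ ha₂
    have hax : a = x := key a (hs₁ ha₁) (hs₂ ha₂)
    exact hx₂ (hax ▸ ha₂)
  -- C₁ ∪ C₂ is a vertex cover of G₁ ⊔ G₂
  have hvc : IsVC (G₁ ⊔ G₂) (C₁ ∪ C₂) := by
    intro u v hadj
    rcases (SimpleGraph.sup_adj _ _ _ _).mp hadj with h | h
    · rcases hC₁min.1 h with h' | h'
      · exact Or.inl (Or.inl h')
      · exact Or.inr (Or.inl h')
    · rcases hC₂min.1 h with h' | h'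
      · exact Or.inl (Or.inr h')
      · exact Or.inr (Or.inr h')
  -- C₁ ∪ C₂ is minimal
  have hmin : IsMinVC (G₁ ⊔ G₂) (C₁ ∪ C₂) := by
    refine minVC_of_priv hvc ?_
    rintro v (hv | hv)
    · obtain ⟨u, hadj, hu⟩ := minVC_priv hC₁min v hv
      refine ⟨u, (SimpleGraph.sup_adj _ _ _ _).mpr (Or.inl hadj), ?_⟩
      rintro (h | h)
      · exact hu h
      · have hux : u = x := key u ⟨v, hadj.symm⟩ (hs₂ h)
        exact hx₂ (hux ▸ h)
    · obtain ⟨u, hadj, hu⟩ := minVC_priv hC₂min v hv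
      by_cases hu1 : u ∈ C₁
      · have hux : u = x := key u (hs₁ hu1) ⟨v, hadj.symm⟩
        subst hux
        obtain ⟨z, hz, hzx, hz₂⟩ := hred v hadj.symm
        refine ⟨z, (SimpleGraph.sup_adj _ _ _ _).mpr (Or.inr hz), ?_⟩
        rintro (h | h)
        · exact hzx (key z (hs₁ h) ⟨v, hz.symm⟩)
        · exact hz₂ h
      · exact ⟨u, (SimpleGraph.sup_adj _ _ _ _).mpr (Or.inr hadj),
          fun h => h.elim (fun h' => hu1 h') (fun h' => hu h')⟩
  refine ⟨⟨hmin, ?_⟩, hdisj⟩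
  -- maximality
  intro D hD
  have hp := minVC_priv hD
  obtain ⟨E₁, hE₁min, hE₁D, hE₁lb, hE₁x⟩ := side_lemma hx hD
  have hx' : G₂.support ∩ G₁.support = {x} := by rw [Set.inter_comm]; exact hx
  have hD' : IsMinVC (G₂ ⊔ G₁) D := by rwa [sup_comm G₁ G₂] at hD
  obtain ⟨E₂, hE₂min, hE₂D, hE₂lb, hE₂x⟩ := side_lemma hx' hD'
  have hsub : D ⊆ E₁ ∪ E₂ := by
    intro v hv
    obtain ⟨u, hadj, hu⟩ := hp v hv
    by_cases hvx : v = x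
    · subst hvx
      rcases (SimpleGraph.sup_adj _ _ _ _).mp hadj with h | h
      · exact Or.inl (hE₁x ⟨hv, u, h, hu⟩)
      · exact Or.inr (hE₂x ⟨hv, u, h, hu⟩)
    · rcases (SimpleGraph.sup_adj _ _ _ _).mp hadj with h | h
      · exact Or.inl (hE₁lb ⟨⟨hv, u, h⟩, hvx⟩)
      · exact Or.inr (hE₂lb ⟨⟨hv, u, h⟩, hvx⟩)
  calc D.ncard ≤ (E₁ ∪ E₂).ncard := Set.ncard_le_ncard hsub (Set.toFinite _)
    _ ≤ E₁.ncard + E₂.ncard := Set.ncard_union_le E₁ E₂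
    _ ≤ C₁.ncard + C₂.ncard := add_le_add (hC₁max E₁ hE₁min) (hC₂max E₂ hE₂min)
    _ = (C₁ ∪ C₂).ncard := (Set.ncard_union_eq hdisj (Set.toFinite _) (Set.toFinite _)).symm
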